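/- Let Θ be a finite set, ψ > 0 a real number, and m₁, m₂ : 2^Θ → ℝ nonnegative mass assignments with m₁(∅) = m₂(∅) = 0 and total masses ∑_{A ⊆ Θ} m₁(A) = ∑_{A ⊆ Θ} m₂(A) = ψ. Let m_PCR5 be the PCR5 combination of m₁ and m₂ (with m_PCR5(∅) = 0 and fractions with zero denominator discarded). Then the OverNormalized PCR5 fusion m(A) = m_PCR5(A)/ψ satisfies m(∅) = 0, m(A) ≥ 0 for all A ⊆ Θ, and ∑_{A ⊆ Θ} m(A) = ψ; i.e., the PCR5 fusion of two OverMasses with common total ψ, after OverNormalization by ψ, is again an OverMass with total ψ assigning zero mass to the empty set. -/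

import Mathlib

lemma pcr5_aux (a b : ℝ) (ha : 0 ≤ a) (hb : 0 ≤ b) :
    a ^ 2 * b / (a + b) + b ^ 2 * a / (b + a) = a * b := by
  rcases eq_or_lt_of_le (add_nonneg ha hb) with h | h
  · have ha0 : a = 0 := by nlinarith
    have hb0 : b = 0 := by nlinarith
    simp [ha0, hb0]
  · have hne : a + b ≠ 0 := ne_of_gt h
    rw [add_comm b a, ← add_div, div_eq_iff hne]
    ring

/-- The PCR5 fusion of two OverMasses `m₁, m₂` with common total mass
`ψ > 0` (nonnegative, vanishing on `∅`), after OverNormalization by `ψ`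
(`m A = m_PCR5 A / ψ`), is again an OverMass with total mass `ψ` assigning zero
mass to the empty set. Fractions with zero denominator are discarded, which matches
Lean's convention `x / 0 = 0`. -/
theorem pcr5_overNormalized_isOverMass
    (Θ : Type*) [Fintype Θ] [DecidableEq Θ]
    (ψ : ℝ) (hψ : ψ > 0)
    (m₁ m₂ : Finset Θ → ℝ)
    (h₁ : ∀ A : Finset Θ, 0 ≤ m₁ A) (h₂ : ∀ A : Finset Θ, 0 ≤ m₂ A)
    (h₁empty : m₁ ∅ = 0) (h₂empty : m₂ ∅ = 0)
    (hs₁ : (∑ A : Finset Θ, m₁ A) = ψ)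
    (hs₂ : (∑ A : Finset Θ, m₂ A) = ψ)
    (m₁₂ : Finset Θ → ℝ)
    (hm₁₂ : ∀ A : Finset Θ,
      m₁₂ A = ∑ X : Finset Θ, ∑ Y : Finset Θ,
        if X ∩ Y = A then m₁ X * m₂ Y else 0)
    (mPCR5 : Finset Θ → ℝ)
    (hPCR5empty : mPCR5 ∅ = 0)
    (hPCR5 : ∀ A : Finset Θ, A ≠ ∅ →
      mPCR5 A = m₁₂ A + ∑ X : Finset Θ,
        if X ∩ A = ∅ then
          m₁ A ^ 2 * m₂ X / (m₁ A + m₂ X) + m₂ A ^ 2 * m₁ X / (m₂ A + m₁ X)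
        else 0)
    (m : Finset Θ → ℝ)
    (hm : ∀ A : Finset Θ, m A = mPCR5 A / ψ) :
    m ∅ = 0 ∧ (∀ A : Finset Θ, 0 ≤ m A) ∧ (∑ A : Finset Θ, m A) = ψ := by
  -- the redistribution term
  set T : Finset Θ → ℝ := fun A => ∑ X : Finset Θ,
    if X ∩ A = ∅ then
      m₁ A ^ 2 * m₂ X / (m₁ A + m₂ X) + m₂ A ^ 2 * m₁ X / (m₂ A + m₁ X)
    else 0 with hT
  have hm₁₂nonneg : ∀ A, 0 ≤ m₁₂ A := by
    intro A
    rw [hm₁₂]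
    apply Finset.sum_nonneg; intro X _
    apply Finset.sum_nonneg; intro Y _
    split
    · exact mul_nonneg (h₁ X) (h₂ Y)
    · exact le_refl 0
  have hTnonneg : ∀ A, 0 ≤ T A := by
    intro A
    apply Finset.sum_nonneg; intro X _
    split
    · apply add_nonneg
      · exact div_nonneg (mul_nonneg (pow_nonneg (h₁ A) 2) (h₂ X))
          (add_nonneg (h₁ A) (h₂ X))
      · exact div_nonneg (mul_nonneg (pow_nonneg (h₂ A) 2) (h₁ X))
          (add_nonneg (h₂ A) (h₁ X))
    · exact le_refl 0
  have hPCR5nonneg : ∀ A, 0 ≤ mPCR5 A := by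
    intro A
    by_cases hA : A = ∅
    · rw [hA, hPCR5empty]
    · rw [hPCR5 A hA]
      exact add_nonneg (hm₁₂nonneg A) (hTnonneg A)
  -- total conjunctive mass
  have hm₁₂tot : (∑ A : Finset Θ, m₁₂ A) = ψ * ψ := by
    simp only [hm₁₂]
    rw [Finset.sum_comm]
    have key : ∀ X : Finset Θ,
        (∑ A : Finset Θ, ∑ Y : Finset Θ, if X ∩ Y = A then m₁ X * m₂ Y else 0)
        = ∑ Y : Finset Θ, m₁ X * m₂ Y := by
      intro X
      rw [Finset.sum_comm]
      apply Finset.sum_congr rfl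
      intro Y _
      simp
    simp only [key, ← Finset.mul_sum, hs₂, ← Finset.sum_mul, hs₁]
  -- T ∅ = 0
  have hT0 : T ∅ = 0 := by
    rw [hT]
    apply Finset.sum_eq_zero
    intro X _
    simp [h₁empty, h₂empty]
  -- total redistribution equals the conflicting mass
  have hTtot : (∑ A : Finset Θ, T A) = m₁₂ ∅ := by
    rw [hm₁₂ ∅]
    simp only [hT]
    have step1 : ∀ A : Finset Θ,
        (∑ X : Finset Θ, if X ∩ A = ∅ then
          m₁ A ^ 2 * m₂ X / (m₁ A + m₂ X) + m₂ A ^ 2 * m₁ X / (m₂ A + m₁ X) else 0)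
        = (∑ X : Finset Θ, if X ∩ A = ∅ then m₁ A ^ 2 * m₂ X / (m₁ A + m₂ X) else 0)
        + (∑ X : Finset Θ, if X ∩ A = ∅ then m₂ A ^ 2 * m₁ X / (m₂ A + m₁ X) else 0) := by
      intro A
      rw [← Finset.sum_add_distrib]
      apply Finset.sum_congr rfl
      intro X _
      split <;> simp
    simp only [step1]
    rw [Finset.sum_add_distrib]
    rw [Finset.sum_comm (s := Finset.univ) (t := Finset.univ)
      (f := fun A X => if X ∩ A = ∅ then m₂ A ^ 2 * m₁ X / (m₂ A + m₁ X) else 0)]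
    rw [← Finset.sum_add_distrib]
    apply Finset.sum_congr rfl
    intro A _
    rw [← Finset.sum_add_distrib]
    apply Finset.sum_congr rfl
    intro X _
    by_cases hAX : A ∩ X = ∅
    · have hXA : X ∩ A = ∅ := by rwa [Finset.inter_comm]
      rw [if_pos hXA, if_pos hAX, if_pos hAX]
      exact pcr5_aux (m₁ A) (m₂ X) (h₁ A) (h₂ X)
    · have hXA : ¬ X ∩ A = ∅ := by rwa [Finset.inter_comm]
      rw [if_neg hXA, if_neg hAX, if_neg hAX]
      ring
  -- total PCR5 mass
  have hPCRtot : (∑ A : Finset Θ, mPCR5 A) = ψ * ψ := by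
    have h1 : (∑ A ∈ Finset.univ.erase ∅, mPCR5 A) + mPCR5 ∅
        = ∑ A : Finset Θ, mPCR5 A := Finset.sum_erase_add _ _ (Finset.mem_univ ∅)
    have h2 : (∑ A ∈ Finset.univ.erase ∅, mPCR5 A)
        = (∑ A ∈ Finset.univ.erase ∅, m₁₂ A) + ∑ A ∈ Finset.univ.erase ∅, T A := by
      rw [← Finset.sum_add_distrib]
      apply Finset.sum_congr rfl
      intro A hA
      exact hPCR5 A (Finset.ne_of_mem_erase hA)
    have h3 : (∑ A ∈ Finset.univ.erase ∅, m₁₂ A) + m₁₂ ∅ = ψ * ψ := by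
      rw [Finset.sum_erase_add _ _ (Finset.mem_univ ∅)]
      exact hm₁₂tot
    have h4 : (∑ A ∈ Finset.univ.erase ∅, T A) = m₁₂ ∅ := by
      have := Finset.sum_erase_add Finset.univ T (Finset.mem_univ ∅)
      rw [hT0, add_zero] at this
      rw [this]
      exact hTtot
    rw [← h1, hPCR5empty, add_zero, h2, h4]
    linarith
  refine ⟨by rw [hm, hPCR5empty, zero_div], fun A => ?_, ?_⟩
  · rw [hm]
    exact div_nonneg (hPCR5nonneg A) (le_of_lt hψ)
  · simp only [hm]
    rw [← Finset.sum_div, hPCRtot]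
    field_simp
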